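/- arXiv:2112.10462 — 5 statements merged into one kernel-verified Lean document; each statement's English description precedes it below -/
import Mathlib

section
/- Let 2 < p < 5, a > 0, c > 0 and b ∈ ℝ. Define h : [0,∞) → ℝ by h(t) = a·t + b·t³ − c·t^{2p−1}. Then h has exactly one critical point in (0,∞), and this critical point is a strict global maximum of h on [0,∞). -/
/-!
Writing `h t = a t + b t³ - c t^(2p-1)`, one has `h' t = t² g t` with
`g t = a / t² + 3b - c (2p - 1) t^(2p-4)`. Since `p > 2`, `g` is strictly decreasing on `(0, ∞)`,
from `+∞` at `0⁺` to `-∞` at `∞`, so it has exactly one zero `t₀`; `h` increases on `[0, t₀]` and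
decreases on `[t₀, ∞)`.
-/

open Real Set Filter Topology

theorem apply_lt_apply_of_deriv_pos_of_deriv_neg {f : ℝ → ℝ} {a t₀ t : ℝ}
    (hf : ContinuousOn f (Ici a)) (ha : a ≤ t₀) (hpos : ∀ x ∈ Ioo a t₀, 0 < deriv f x)
    (hneg : ∀ x ∈ Ioi t₀, deriv f x < 0) (ht : a ≤ t) (hne : t ≠ t₀) : f t < f t₀ := by
  rcases hne.lt_or_gt with hlt | hgt
  · refine strictMonoOn_of_deriv_pos (convex_Icc a t₀) (hf.mono Icc_subset_Ici_self) ?_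
      ⟨ht, hlt.le⟩ ⟨ha, le_rfl⟩ hlt
    rwa [interior_Icc]
  · refine strictAntiOn_of_deriv_neg (convex_Ici t₀) (hf.mono (Ici_subset_Ici.2 ha)) ?_
      self_mem_Ici hgt.le hgt
    rwa [interior_Ici]

noncomputable def fiberMap (p a b c t : ℝ) : ℝ := a * t + b * t ^ 3 - c * t ^ (2 * p - 1)

noncomputable def fiberSlope (p a b c t : ℝ) : ℝ :=
  a / t ^ 2 + 3 * b - c * (2 * p - 1) * t ^ (2 * p - 4)

section

variable {p a c : ℝ}

theorem continuous_fiberMap (b : ℝ) (hp : 1 / 2 ≤ p) : Continuous (fiberMap p a b c) := by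
  have : 0 ≤ 2 * p - 1 := by linarith
  unfold fiberMap
  fun_prop (disch := assumption)

theorem hasDerivAt_fiberMap (b : ℝ) {t : ℝ} (ht : 0 < t) :
    HasDerivAt (fiberMap p a b c) (t ^ 2 * fiberSlope p a b c t) t := by
  have hderiv : HasDerivAt (fiberMap p a b c)
      (a * 1 + b * (3 * t ^ 2) - c * ((2 * p - 1) * t ^ (2 * p - 1 - 1))) t := by
    refine ((hasDerivAt_id t).const_mul a).add ?_ |>.sub
      ((hasDerivAt_rpow_const (Or.inl ht.ne')).const_mul c)
    simpa using (hasDerivAt_pow 3 t).const_mul b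
  have hpow : t ^ (2 * p - 1 - 1) = t ^ 2 * t ^ (2 * p - 4) := by
    rw [← rpow_natCast, ← rpow_add ht]
    congr 1
    push_cast
    ring
  convert hderiv using 1
  rw [hpow, fiberSlope]
  field_simp

theorem continuousOn_fiberSlope (b : ℝ) : ContinuousOn (fiberSlope p a b c) (Ioi 0) := by
  intro t ht
  have : t ≠ 0 := ne_of_gt ht
  unfold fiberSlope
  fun_prop (disch := simp [this])

theorem strictAntiOn_fiberSlope (b : ℝ) (hp : 2 ≤ p) (ha : 0 < a) (hc : 0 ≤ c) :
    StrictAntiOn (fiberSlope p a b c) (Ioi 0) := by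
  intro x hx y _ hxy
  have hinv : a / y ^ 2 < a / x ^ 2 :=
    div_lt_div_of_pos_left ha (pow_pos hx 2) (pow_lt_pow_left₀ hxy hx.le two_ne_zero)
  have hrpow : x ^ (2 * p - 4) ≤ y ^ (2 * p - 4) := rpow_le_rpow hx.le hxy.le (by linarith)
  have hd : 0 ≤ c * (2 * p - 1) := mul_nonneg hc (by linarith)
  unfold fiberSlope
  nlinarith [mul_le_mul_of_nonneg_left hrpow hd]

theorem tendsto_fiberSlope_nhdsGT_zero (b : ℝ) (hp : 2 < p) (ha : 0 < a) :
    Tendsto (fiberSlope p a b c) (𝓝[>] 0) atTop := by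
  have hinv : Tendsto (fun t : ℝ => a / t ^ 2) (𝓝[>] 0) atTop := by
    simpa [div_eq_mul_inv, inv_pow] using
      ((tendsto_pow_atTop two_ne_zero).comp tendsto_inv_nhdsGT_zero).const_mul_atTop ha
  have hrpow : Tendsto (fun t : ℝ => t ^ (2 * p - 4)) (𝓝[>] 0) (𝓝 0) := by
    have hq : 0 < 2 * p - 4 := by linarith
    simpa [zero_rpow hq.ne'] using
      ((continuous_rpow_const hq.le).tendsto 0).mono_left nhdsWithin_le_nhds
  have := (hinv.atTop_add (tendsto_const_nhds (x := 3 * b))).atTop_add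
    (hrpow.const_mul (c * (2 * p - 1))).neg
  unfold fiberSlope
  simpa only [sub_eq_add_neg] using this

theorem tendsto_fiberSlope_atTop (b : ℝ) (hp : 2 < p) (hc : 0 < c) :
    Tendsto (fiberSlope p a b c) atTop atBot := by
  have hinv : Tendsto (fun t : ℝ => a / t ^ 2) atTop (𝓝 0) :=
    tendsto_const_nhds.div_atTop (tendsto_pow_atTop two_ne_zero)
  have hrpow : Tendsto (fun t : ℝ => c * (2 * p - 1) * t ^ (2 * p - 4)) atTop atTop :=
    (tendsto_rpow_atTop (by linarith)).const_mul_atTop (by nlinarith)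
  have := (hinv.add (tendsto_const_nhds (x := 3 * b))).add_atBot
    (tendsto_neg_atTop_atBot.comp hrpow)
  unfold fiberSlope
  simpa only [sub_eq_add_neg, Function.comp_def] using this

theorem exists_fiberSlope_eq_zero (b : ℝ) (hp : 2 < p) (ha : 0 < a) (hc : 0 < c) :
    ∃ t₀, 0 < t₀ ∧ fiberSlope p a b c t₀ = 0 :=
  isPreconnected_Ioi.intermediate_value_Iii (le_principal_iff.2 (Ioi_mem_atTop 0))
    (le_principal_iff.2 self_mem_nhdsWithin) (continuousOn_fiberSlope b)
    (tendsto_fiberSlope_atTop b hp hc) (tendsto_fiberSlope_nhdsGT_zero b hp ha) (mem_univ 0)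

end

theorem stmt_1_general (p a b c : ℝ) (hp1 : 2 < p) (ha : 0 < a) (hc : 0 < c)
    (h : ℝ → ℝ) (hh : ∀ t, h t = a * t + b * t ^ 3 - c * t ^ (2 * p - 1)) :
    ∃ t₀ : ℝ, 0 < t₀ ∧ deriv h t₀ = 0 ∧
      (∀ t : ℝ, 0 < t → deriv h t = 0 → t = t₀) ∧
      (∀ t : ℝ, 0 ≤ t → t ≠ t₀ → h t < h t₀) := by
  obtain rfl : h = fiberMap p a b c := funext hh
  obtain ⟨t₀, ht₀, hzero⟩ := exists_fiberSlope_eq_zero b hp1 ha hc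
  have hanti := strictAntiOn_fiberSlope b hp1.le ha hc.le
  have hderiv : ∀ t, 0 < t → deriv (fiberMap p a b c) t = t ^ 2 * fiberSlope p a b c t :=
    fun t ht => (hasDerivAt_fiberMap b ht).deriv
  refine ⟨t₀, ht₀, by rw [hderiv t₀ ht₀, hzero, mul_zero], fun t ht hdt => ?_,
    fun t ht hne => apply_lt_apply_of_deriv_pos_of_deriv_neg
      (continuous_fiberMap b (by linarith)).continuousOn ht₀.le (fun x hx => ?_)
      (fun x hx => ?_) ht hne⟩
  · rw [hderiv t ht, mul_eq_zero_iff_left (pow_pos ht 2).ne'] at hdt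
    exact hanti.injOn ht ht₀ (hdt.trans hzero.symm)
  · rw [hderiv x hx.1]
    exact mul_pos (pow_pos hx.1 2) (hzero ▸ hanti hx.1 ht₀ hx.2)
  · have hx₀ : 0 < x := ht₀.trans hx
    rw [hderiv x hx₀]
    exact mul_neg_of_pos_of_neg (pow_pos hx₀ 2) (hzero ▸ hanti ht₀ hx₀ hx)

theorem stmt_1 (p a b c : ℝ) (hp1 : 2 < p) (hp2 : p < 5) (ha : 0 < a) (hc : 0 < c)
    (h : ℝ → ℝ) (hh : ∀ t, h t = a * t + b * t ^ 3 - c * t ^ (2 * p - 1)) :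
    ∃ t₀ : ℝ, 0 < t₀ ∧ deriv h t₀ = 0 ∧
      (∀ t : ℝ, 0 < t → deriv h t = 0 → t = t₀) ∧
      (∀ t : ℝ, 0 ≤ t → t ≠ t₀ → h t < h t₀) :=
  stmt_1_general p a b c hp1 ha hc h hh
end

section
/- Let p > 1 and let a, b be positive reals. Then ∫₀^{2π} [ (a + b cos θ)/a − (b + a cos θ)/b ] (a² + 2ab cos θ + b²)^{(p−1)/2} dθ = (p−1)(b² − a²) ∫₀^{2π} sin²θ · (a² + 2ab cos θ + b²)^{(p−3)/2} dθ. -/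
/-! With `Q θ = a² + 2ab cos θ + b²`, the integrand on the left is `(b² - a²)/(ab) · cos θ · Q θ^((p-1)/2)`,
and integrating `cos θ · Q θ^s` by parts against `sin θ` (which vanishes at `0` and `2π`) produces
`2sab ∫ sin² θ · Q θ^(s-1)`. When `a = b` both sides vanish; otherwise `Q > 0`, so `Q^s` is smooth. -/

open Real MeasureTheory

lemma sq_add_two_mul_mul_cos_add_sq_pos {a b : ℝ} (hab : a ^ 2 ≠ b ^ 2) (θ : ℝ) :
    0 < a ^ 2 + 2 * a * b * cos θ + b ^ 2 := by
  have habs : 0 < (|a| - |b|) ^ 2 := by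
    refine sq_pos_of_ne_zero (sub_ne_zero.mpr fun h => hab ?_)
    rw [← sq_abs a, h, sq_abs]
  have hcos : |a * b * cos θ| ≤ |a| * |b| := by
    rw [abs_mul, abs_mul]
    exact mul_le_of_le_one_right (by positivity) (abs_cos_le_one θ)
  nlinarith [neg_abs_le (a * b * cos θ), sq_abs a, sq_abs b]

lemma hasDerivAt_sin_mul_rpow {a b s θ : ℝ} (hQ : 0 < a ^ 2 + 2 * a * b * cos θ + b ^ 2) :
    HasDerivAt (fun t => sin t * (a ^ 2 + 2 * a * b * cos t + b ^ 2) ^ s)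
      (cos θ * (a ^ 2 + 2 * a * b * cos θ + b ^ 2) ^ s -
        2 * s * a * b * (sin θ ^ 2 * (a ^ 2 + 2 * a * b * cos θ + b ^ 2) ^ (s - 1))) θ := by
  have hQ' : HasDerivAt (fun t => a ^ 2 + 2 * a * b * cos t + b ^ 2) (2 * a * b * -sin θ) θ :=
    (((hasDerivAt_cos θ).const_mul (2 * a * b)).const_add (a ^ 2)).add_const (b ^ 2)
  refine ((hasDerivAt_sin θ).mul (hQ'.rpow_const (p := s) (Or.inl hQ.ne'))).congr_deriv ?_
  ring

lemma integral_cos_mul_rpow {a b : ℝ} (hab : a ^ 2 ≠ b ^ 2) (s : ℝ) :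
    ∫ θ in (0 : ℝ)..(2 * π), cos θ * (a ^ 2 + 2 * a * b * cos θ + b ^ 2) ^ s =
      2 * s * a * b *
        ∫ θ in (0 : ℝ)..(2 * π), sin θ ^ 2 * (a ^ 2 + 2 * a * b * cos θ + b ^ 2) ^ (s - 1) := by
  have hQ := sq_add_two_mul_mul_cos_add_sq_pos hab
  have hcont : ∀ r : ℝ, Continuous fun θ => (a ^ 2 + 2 * a * b * cos θ + b ^ 2) ^ r := fun r =>
    (by fun_prop : Continuous fun θ => a ^ 2 + 2 * a * b * cos θ + b ^ 2).rpow_const (p := r)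
      fun θ => Or.inl (hQ θ).ne'
  have hint₁ := (continuous_cos.fun_mul (hcont s)).intervalIntegrable (μ := volume) 0 (2 * π)
  have hint₂ := ((continuous_sin.fun_pow 2).fun_mul (hcont (s - 1))).intervalIntegrable
    (μ := volume) 0 (2 * π)
  have hftc := intervalIntegral.integral_eq_sub_of_hasDerivAt
    (fun θ _ => hasDerivAt_sin_mul_rpow (s := s) (hQ θ)) (hint₁.sub (hint₂.const_mul _))
  rw [intervalIntegral.integral_sub hint₁ (hint₂.const_mul _),
    intervalIntegral.integral_const_mul, sin_two_pi, sin_zero, zero_mul, zero_mul, sub_zero,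
    sub_eq_zero] at hftc
  exact hftc

lemma div_sub_div_eq_mul_cos {a b : ℝ} (ha : a ≠ 0) (hb : b ≠ 0) (θ : ℝ) :
    (a + b * cos θ) / a - (b + a * cos θ) / b = (b ^ 2 - a ^ 2) / (a * b) * cos θ := by
  field_simp
  ring

theorem stmt_5_general (p a b : ℝ) (ha : 0 < a) (hb : 0 < b) :
    ∫ θ in (0 : ℝ)..(2 * π),
        ((a + b * Real.cos θ) / a - (b + a * Real.cos θ) / b) *
          (a ^ 2 + 2 * a * b * Real.cos θ + b ^ 2) ^ ((p - 1) / 2) =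
      (p - 1) * (b ^ 2 - a ^ 2) *
        ∫ θ in (0 : ℝ)..(2 * π),
          Real.sin θ ^ 2 * (a ^ 2 + 2 * a * b * Real.cos θ + b ^ 2) ^ ((p - 3) / 2) := by
  rcases eq_or_ne a b with rfl | hab
  · simp
  have hsq : a ^ 2 ≠ b ^ 2 := (pow_left_inj₀ ha.le hb.le two_ne_zero).not.mpr hab
  simp_rw [div_sub_div_eq_mul_cos ha.ne' hb.ne', mul_assoc ((b ^ 2 - a ^ 2) / (a * b)),
    intervalIntegral.integral_const_mul, integral_cos_mul_rpow hsq,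
    show (p - 1) / 2 - 1 = (p - 3) / 2 by ring]
  field_simp

open Real in
theorem stmt_5 (p a b : ℝ) (hp : 1 < p) (ha : 0 < a) (hb : 0 < b) :
    ∫ θ in (0 : ℝ)..(2 * π),
        ((a + b * Real.cos θ) / a - (b + a * Real.cos θ) / b) *
          (a ^ 2 + 2 * a * b * Real.cos θ + b ^ 2) ^ ((p - 1) / 2) =
      (p - 1) * (b ^ 2 - a ^ 2) *
        ∫ θ in (0 : ℝ)..(2 * π),
          Real.sin θ ^ 2 * (a ^ 2 + 2 * a * b * Real.cos θ + b ^ 2) ^ ((p - 3) / 2) :=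
  stmt_5_general p a b ha hb
end

section
/- Define α : [0,∞) → ℝ by α(t) = ∫₀^{2π} (1 + t cos θ)(1 + 2t cos θ + t²)^{(p−1)/2} dθ for fixed p > 1. Then α is continuous, α(0) = 2π, lim_{t→∞} α(t)/t^{p−1} = π(p+1), and consequently there exists C > 0 such that α(t) ≤ C(1 + t^{p−1}) for all t ≥ 0. -/
/-!
Put `q = (p - 1) / 2`, `G s = ∫ (1 + 2 s cos θ + s²)^q` and `F s = ∫ cos θ (1 + 2 s cos θ + s²)^q`.
Homogeneity, `1 + 2 t cos θ + t² = t² (1 + 2 t⁻¹ cos θ + t⁻²)`, gives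
`α t = t^(p-1) (G t⁻¹ + t F t⁻¹)` for `t > 0`. As `t → ∞`, `G t⁻¹ → G 0 = 2π`, and since `F 0 = 0`,
`t F t⁻¹ → F' 0 = 2q ∫ cos² θ = (p - 1)π`; so `α t / t^(p-1) → π (p + 1)`. The bound combines
this asymptotic with the boundedness of the continuous `α` on a compact interval `[0, T]`.
-/

open Real Filter Set Metric Topology

/-- `polarSq s θ = ‖1 + s e^{iθ}‖²`. -/
noncomputable def polarSq (s θ : ℝ) : ℝ := 1 + 2 * s * cos θ + s ^ 2

lemma sq_one_sub_abs_le_polarSq (s θ : ℝ) : (1 - |s|) ^ 2 ≤ polarSq s θ := by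
  have : |s * cos θ| ≤ |s| := by
    rw [abs_mul]; exact mul_le_of_le_one_right (abs_nonneg s) (abs_cos_le_one θ)
  rw [polarSq]; nlinarith [neg_abs_le (s * cos θ), sq_abs s]

lemma polarSq_nonneg (s θ : ℝ) : 0 ≤ polarSq s θ :=
  (sq_nonneg _).trans (sq_one_sub_abs_le_polarSq s θ)

lemma polarSq_pos_of_abs_lt_one {s : ℝ} (hs : |s| < 1) (θ : ℝ) : 0 < polarSq s θ :=
  (pow_pos (by linarith) 2).trans_le (sq_one_sub_abs_le_polarSq s θ)

lemma polarSq_zero (θ : ℝ) : polarSq 0 θ = 1 := by simp [polarSq]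

lemma polarSq_eq_sq_mul_polarSq_inv {t : ℝ} (ht : t ≠ 0) (θ : ℝ) :
    polarSq t θ = t ^ 2 * polarSq t⁻¹ θ := by
  simp only [polarSq]; field_simp; ring

lemma polarSq_rpow_eq_mul_polarSq_inv_rpow {t : ℝ} (ht : 0 < t) (q θ : ℝ) :
    polarSq t θ ^ q = t ^ (2 * q) * polarSq t⁻¹ θ ^ q := by
  rw [polarSq_eq_sq_mul_polarSq_inv ht.ne', mul_rpow (sq_nonneg t) (polarSq_nonneg _ _),
    ← rpow_natCast, ← rpow_mul ht.le, Nat.cast_ofNat]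

lemma continuous_polarSq_rpow {q : ℝ} (hq : 0 ≤ q) :
    Continuous fun x : ℝ × ℝ => polarSq x.1 x.2 ^ q :=
  (by unfold polarSq; fun_prop : Continuous fun x : ℝ × ℝ => polarSq x.1 x.2).rpow_const
    fun _ => Or.inr hq

lemma hasDerivAt_polarSq (s θ : ℝ) :
    HasDerivAt (fun s => polarSq s θ) (2 * cos θ + 2 * s) s := by
  have := ((((hasDerivAt_id' s).const_mul 2).mul_const (cos θ)).const_add 1).add
    (hasDerivAt_pow 2 s)
  exact this.congr_deriv (by norm_num)

theorem hasDerivAt_intervalIntegral_of_continuousOn_deriv {f f' : ℝ → ℝ → ℝ} {a b x₀ r : ℝ}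
    (hr : 0 < r) (hf : ∀ x ∈ ball x₀ r, ContinuousOn (f x) (uIcc a b))
    (hf' : ContinuousOn (Function.uncurry f') (closedBall x₀ r ×ˢ uIcc a b))
    (hderiv : ∀ x ∈ ball x₀ r, ∀ t ∈ uIcc a b, HasDerivAt (f · t) (f' x t) x) :
    HasDerivAt (fun x => ∫ t in a..b, f x t) (∫ t in a..b, f' x₀ t) x₀ := by
  obtain ⟨M, hM⟩ :=
    ((isCompact_closedBall x₀ r).prod isCompact_uIcc).exists_bound_of_continuousOn hf'
  have hf'₀ : ContinuousOn (f' x₀) (uIcc a b) :=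
    hf'.comp (continuousOn_const.prodMk continuousOn_id)
      fun t ht => ⟨mem_closedBall_self hr.le, ht⟩
  refine (intervalIntegral.hasDerivAt_integral_of_dominated_loc_of_deriv_le (bound := fun _ => M)
    (ball_mem_nhds x₀ hr) ?_ (hf x₀ (mem_ball_self hr)).intervalIntegrable
    ((hf'₀.aestronglyMeasurable measurableSet_uIcc).mono_set uIoc_subset_uIcc) ?_
    intervalIntegrable_const ?_).2
  · filter_upwards [ball_mem_nhds x₀ hr] with x hx
    exact ((hf x hx).aestronglyMeasurable measurableSet_uIcc).mono_set uIoc_subset_uIcc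
  · exact .of_forall fun t ht x hx =>
      hM (x, t) ⟨ball_subset_closedBall hx, uIoc_subset_uIcc ht⟩
  · exact .of_forall fun t ht x hx => hderiv x hx t (uIoc_subset_uIcc ht)

theorem HasDerivAt.tendsto_mul_comp_inv_atTop {F : ℝ → ℝ} {d : ℝ} (hF : HasDerivAt F d 0)
    (h₀ : F 0 = 0) : Tendsto (fun t => t * F t⁻¹) atTop (𝓝 d) := by
  have h := hF.tendsto_slope.comp
    (tendsto_inv_atTop_nhdsGT_zero.mono_right (nhdsWithin_mono _ fun _ h => ne_of_gt h))
  refine h.congr fun t => ?_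
  simp [slope_def_field, h₀, div_eq_mul_inv, mul_comm]

theorem exists_le_mul_one_add_of_tendsto_div {f g : ℝ → ℝ} {L : ℝ}
    (hf : ContinuousOn f (Ici 0)) (hg : ∀ t, 0 ≤ t → 0 ≤ g t) (hg_pos : ∀ᶠ t in atTop, 0 < g t)
    (hlim : Tendsto (fun t => f t / g t) atTop (𝓝 L)) :
    ∃ C > 0, ∀ t, 0 ≤ t → f t ≤ C * (1 + g t) := by
  obtain ⟨T, hT⟩ := ((hlim.eventually_lt_const (lt_add_one L)).and hg_pos).exists_forall_of_atTop
  obtain ⟨M, hM⟩ := (isCompact_Icc (a := (0 : ℝ)) (b := T)).exists_bound_of_continuousOn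
    (hf.mono Icc_subset_Ici_self)
  refine ⟨max M (|L| + 1), by positivity, fun t ht => ?_⟩
  have hC : 0 ≤ max M (|L| + 1) := by positivity
  rcases le_or_gt t T with htT | hTt
  · have := (le_abs_self _).trans (hM t ⟨ht, htT⟩)
    nlinarith [le_max_left M (|L| + 1), hg t ht]
  · obtain ⟨hlt, hpos⟩ := hT t hTt.le
    have := (div_lt_iff₀ hpos).mp hlt
    nlinarith [le_max_right M (|L| + 1), le_abs_self L]

noncomputable def powIntegral (q s : ℝ) : ℝ := ∫ θ in (0 : ℝ)..2 * π, polarSq s θ ^ q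

noncomputable def cosPowIntegral (q s : ℝ) : ℝ := ∫ θ in (0 : ℝ)..2 * π, cos θ * polarSq s θ ^ q

noncomputable def weightedPowIntegral (q t : ℝ) : ℝ :=
  ∫ θ in (0 : ℝ)..2 * π, (1 + t * cos θ) * polarSq t θ ^ q

lemma continuous_powIntegral {q : ℝ} (hq : 0 ≤ q) : Continuous (powIntegral q) :=
  intervalIntegral.continuous_parametric_intervalIntegral_of_continuous'
    (continuous_polarSq_rpow hq) _ _

lemma continuous_weightedPowIntegral {q : ℝ} (hq : 0 ≤ q) :
    Continuous (weightedPowIntegral q) :=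
  intervalIntegral.continuous_parametric_intervalIntegral_of_continuous'
    ((by fun_prop : Continuous fun x : ℝ × ℝ => 1 + x.1 * cos x.2).mul
      (continuous_polarSq_rpow hq)) _ _

lemma powIntegral_zero (q : ℝ) : powIntegral q 0 = 2 * π := by
  simp [powIntegral, polarSq_zero]

lemma cosPowIntegral_zero (q : ℝ) : cosPowIntegral q 0 = 0 := by
  simp [cosPowIntegral, polarSq_zero]

lemma weightedPowIntegral_zero (q : ℝ) : weightedPowIntegral q 0 = 2 * π := by
  simp [weightedPowIntegral, polarSq_zero]

lemma hasDerivAt_cosPowIntegral (q : ℝ) : HasDerivAt (cosPowIntegral q) (2 * q * π) 0 := by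
  have hpos : ∀ x ∈ closedBall (0 : ℝ) (1 / 2), ∀ θ, 0 < polarSq x θ := fun x hx =>
    polarSq_pos_of_abs_lt_one
      ((mem_closedBall_zero_iff.mp hx).trans_lt (by norm_num : (1 / 2 : ℝ) < 1))
  have hvalue : ∫ θ in (0 : ℝ)..2 * π, cos θ * ((2 * cos θ + 2 * 0) * q * polarSq 0 θ ^ (q - 1))
      = 2 * q * π := by
    simp only [polarSq_zero, one_rpow, mul_one, mul_zero, add_zero]
    simp_rw [show ∀ θ, cos θ * (2 * cos θ * q) = 2 * q * cos θ ^ 2 from fun θ => by ring]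
    simp [integral_cos_sq]
  rw [← hvalue]
  refine hasDerivAt_intervalIntegral_of_continuousOn_deriv
    (f := fun s θ => cos θ * polarSq s θ ^ q)
    (f' := fun s θ => cos θ * ((2 * cos θ + 2 * s) * q * polarSq s θ ^ (q - 1))) (r := 1 / 2)
    (by norm_num) ?_ ?_ ?_
  · intro x hx
    exact (continuous_cos.mul ((by unfold polarSq; fun_prop : Continuous (polarSq x)).rpow_const
      fun θ => Or.inl (hpos x (ball_subset_closedBall hx) θ).ne')).continuousOn
  · refine ContinuousOn.mul (by fun_prop) (ContinuousOn.mul (by fun_prop) ?_)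
    exact ContinuousOn.rpow_const (by unfold polarSq; fun_prop)
      fun x hx => Or.inl (hpos x.1 hx.1 x.2).ne'
  · intro x hx θ _
    exact ((hasDerivAt_polarSq x θ).rpow_const
      (Or.inl (hpos x (ball_subset_closedBall hx) θ).ne')).const_mul (cos θ)

lemma weightedPowIntegral_eq {q t : ℝ} (hq : 0 ≤ q) (ht : 0 < t) :
    weightedPowIntegral q t = t ^ (2 * q) * (powIntegral q t⁻¹ + t * cosPowIntegral q t⁻¹) := by
  have hcont : Continuous fun θ => polarSq t⁻¹ θ ^ q :=
    (continuous_polarSq_rpow hq).comp (continuous_const.prodMk continuous_id)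
  calc weightedPowIntegral q t
      = ∫ θ in (0 : ℝ)..2 * π,
          t ^ (2 * q) * (polarSq t⁻¹ θ ^ q + t * (cos θ * polarSq t⁻¹ θ ^ q)) :=
        intervalIntegral.integral_congr fun θ _ => by
          simp only [polarSq_rpow_eq_mul_polarSq_inv_rpow ht]
          ring
    _ = _ := by
        rw [intervalIntegral.integral_const_mul, intervalIntegral.integral_add
          (hcont.intervalIntegrable _ _)
          ((show Continuous fun θ => t * (cos θ * polarSq t⁻¹ θ ^ q) from
            continuous_const.mul (continuous_cos.mul hcont)).intervalIntegrable _ _),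
          intervalIntegral.integral_const_mul, powIntegral, cosPowIntegral]

lemma tendsto_weightedPowIntegral_div_rpow {q : ℝ} (hq : 0 ≤ q) :
    Tendsto (fun t => weightedPowIntegral q t / t ^ (2 * q)) atTop (𝓝 (2 * π + 2 * q * π)) := by
  have hpow : Tendsto (fun t => powIntegral q t⁻¹) atTop (𝓝 (2 * π)) :=
    powIntegral_zero q ▸ ((continuous_powIntegral hq).tendsto 0).comp tendsto_inv_atTop_zero
  have hcos := (hasDerivAt_cosPowIntegral q).tendsto_mul_comp_inv_atTop (cosPowIntegral_zero q)
  refine (hpow.add hcos).congr' ?_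
  filter_upwards [eventually_gt_atTop 0] with t ht
  rw [weightedPowIntegral_eq hq ht, mul_div_cancel_left₀ _ (rpow_pos_of_pos ht _).ne']

open Real Filter in
theorem stmt_10 (p : ℝ) (hp : 1 < p) (α : ℝ → ℝ)
    (hα : ∀ t, α t = ∫ θ in (0 : ℝ)..(2 * π),
        (1 + t * Real.cos θ) * (1 + 2 * t * Real.cos θ + t ^ 2) ^ ((p - 1) / 2)) :
    ContinuousOn α (Set.Ici 0) ∧ α 0 = 2 * π ∧
      Tendsto (fun t => α t / t ^ (p - 1)) atTop (nhds (π * (p + 1))) ∧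
      ∃ C > 0, ∀ t : ℝ, 0 ≤ t → α t ≤ C * (1 + t ^ (p - 1)) := by
  have hq : 0 ≤ (p - 1) / 2 := by linarith
  obtain rfl : α = weightedPowIntegral ((p - 1) / 2) := funext hα
  have hcont := (continuous_weightedPowIntegral hq).continuousOn (s := Ici 0)
  have hlim : Tendsto (fun t => weightedPowIntegral ((p - 1) / 2) t / t ^ (p - 1)) atTop
      (𝓝 (π * (p + 1))) := by
    have h := tendsto_weightedPowIntegral_div_rpow hq
    rw [mul_div_cancel₀ _ two_ne_zero] at h
    convert h using 2
    ring
  refine ⟨hcont, weightedPowIntegral_zero _, hlim,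
    exists_le_mul_one_add_of_tendsto_div hcont (fun t ht => rpow_nonneg ht _) ?_ hlim⟩
  filter_upwards [eventually_gt_atTop 0] with t ht using rpow_pos_of_pos ht _
end

section
/- Let u₁ ∈ H¹(ℝ³), u₁ ≠ 0, solve −Δu₁ + λu₁ + μ11 φ_{u₁} u₁ = |u₁|^{p−1}u₁ with λ, μ11 > 0 and (−2 + √73)/3 ≤ p < 5. Set a = ∫|∇u₁|², b = λ∫u₁², c = μ11∫φ_{u₁}u₁², d = ∫|u₁|^{p+1}. Assuming the Nehari identity a + b + c − d = 0 and the Pohozaev identity (1/2)a + (3/2)b + (5/4)c − (3/(p+1))d = 0, one has a + b + 3c − p·d = (1/3)(−8b − ((3p² + 4p − 23)/(p+1)) d) < 0. -/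
theorem stmt_16 (p a b c d : ℝ) (hp1 : (-2 + Real.sqrt 73) / 3 ≤ p) (hp2 : p < 5)
    (hb : 0 < b) (hd : 0 < d)
    (hNehari : a + b + c - d = 0)
    (hPohozaev : (1 / 2) * a + (3 / 2) * b + (5 / 4) * c - (3 / (p + 1)) * d = 0) :
    a + b + 3 * c - p * d = (1 / 3) * (-8 * b - ((3 * p ^ 2 + 4 * p - 23) / (p + 1)) * d) ∧
      a + b + 3 * c - p * d < 0 := by
  have hs8 : (8 : ℝ) ≤ Real.sqrt 73 := by
    have : (8 : ℝ) = Real.sqrt 64 := by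
      rw [show (64 : ℝ) = 8 ^ 2 by norm_num, Real.sqrt_sq (by norm_num)]
    rw [this]
    exact Real.sqrt_le_sqrt (by norm_num)
  have hp2le : (2 : ℝ) ≤ p := by
    have : (2 : ℝ) ≤ (-2 + Real.sqrt 73) / 3 := by linarith
    linarith
  have hp1pos : 0 < p + 1 := by linarith
  have hpne : p + 1 ≠ 0 := ne_of_gt hp1pos
  have hsq : Real.sqrt 73 ^ 2 = 73 := Real.sq_sqrt (by norm_num)
  have hq : 0 ≤ 3 * p ^ 2 + 4 * p - 23 := by
    have h1 : Real.sqrt 73 ≤ 3 * p + 2 := by linarith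
    nlinarith [Real.sqrt_nonneg (73 : ℝ)]
  have heq : a + b + 3 * c - p * d =
      (1 / 3) * (-8 * b - ((3 * p ^ 2 + 4 * p - 23) / (p + 1)) * d) := by
    field_simp at hPohozaev ⊢
    nlinarith [hNehari, hPohozaev]
  refine ⟨heq, ?_⟩
  rw [heq]
  have h1 : 0 ≤ ((3 * p ^ 2 + 4 * p - 23) / (p + 1)) * d :=
    mul_nonneg (div_nonneg hq (le_of_lt hp1pos)) hd.le
  nlinarith
end

section
/- Let 2 < p < 5 and suppose a ≥ 0 and b, d > 0, c, k ∈ ℝ, ω ∈ ℝ satisfy the four relations: (1/2)a + (1/2)b + (1/4)c − d/(p+1) = k; (3/2)a + (1/2)b + (3/4)c − ((2p−1)/(p+1))d = 0; (1−3ω)a + (1−ω)b + (1−3ω)c + (−1+(2p−1)ω)d = 0; (1−3ω)(1/2)a + (1−ω)(3/2)b + (1−3ω)(5/4)c − (1−(2p−1)ω)(3/(p+1))d = 0. If additionally k > 0, then ω = 0. -/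
theorem stmt_18 (p a b c d k ω : ℝ) (hp1 : 2 < p) (hp2 : p < 5)
    (ha : 0 ≤ a) (hb : 0 < b) (hd : 0 < d) (hk : 0 < k)
    (h1 : (1 / 2) * a + (1 / 2) * b + (1 / 4) * c - d / (p + 1) = k)
    (h2 : (3 / 2) * a + (1 / 2) * b + (3 / 4) * c - ((2 * p - 1) / (p + 1)) * d = 0)
    (h3 : (1 - 3 * ω) * a + (1 - ω) * b + (1 - 3 * ω) * c + (-1 + (2 * p - 1) * ω) * d = 0)
    (h4 : (1 - 3 * ω) * (1 / 2) * a + (1 - ω) * (3 / 2) * b + (1 - 3 * ω) * (5 / 4) * c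
        - (1 - (2 * p - 1) * ω) * (3 / (p + 1)) * d = 0) :
    ω = 0 := by
  have hq : (0:ℝ) < p + 1 := by linarith
  have hne : p + 1 ≠ 0 := ne_of_gt hq
  field_simp at h1 h2 h4
  have key : ω * (8 * (p - 1) * (p - 2) * d + 6 * k * (p + 1)) = 0 := by
    linear_combination (-3 * ω / 4) * h1 + (ω - 1 / 4) * h2 + 4 * (p + 1) * h3 - (1 / 4) * h4
  have hpos : 0 < 8 * (p - 1) * (p - 2) * d + 6 * k * (p + 1) := by
    have h5 : 0 < (p - 1) * ((p - 2) * d) := mul_pos (by linarith) (mul_pos (by linarith) hd)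
    nlinarith [mul_pos hk hq]
  rcases mul_eq_zero.mp key with h | h
  · exact h
  · linarith
end
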